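/- arXiv:2605.17233 — 5 statements merged into one kernel-verified Lean document; each statement's English description precedes it below -/
import Mathlib

section
/- For every real x > 0, the quantity (1 − x·coth x)/sinh²(x) lies strictly between −1/3 and 0; that is, −1/3 < (1 − x·coth x)/sinh²(x) < 0. -/
open Real

private lemma sinh_lt_mul_cosh {x : ℝ} (hx : 0 < x) : Real.sinh x < x * Real.cosh x := by
  have h : StrictMonoOn (fun t => t * Real.cosh t - Real.sinh t) (Set.Ici 0) := by
    apply strictMonoOn_of_deriv_pos (convex_Ici 0)
    · fun_prop
    · intro t ht
      rw [interior_Ici] at ht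
      have ht' : 0 < t := ht
      have hd : HasDerivAt (fun t => t * Real.cosh t - Real.sinh t)
          (1 * Real.cosh t + t * Real.sinh t - Real.cosh t) t :=
        ((hasDerivAt_id t).mul (Real.hasDerivAt_cosh t)).sub (Real.hasDerivAt_sinh t)
      rw [hd.deriv]
      have := Real.sinh_pos_iff.2 ht'
      nlinarith
  have := h (Set.self_mem_Ici) (Set.mem_Ici.2 hx.le) hx
  simp at this
  linarith

private lemma key_pos {x : ℝ} (hx : 0 < x) :
    0 < Real.sinh x - x * Real.cosh x + (Real.sinh x) ^ 3 / 3 := by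
  have h : StrictMonoOn (fun t => Real.sinh t - t * Real.cosh t + (Real.sinh t) ^ 3 / 3)
      (Set.Ici 0) := by
    apply strictMonoOn_of_deriv_pos (convex_Ici 0)
    · fun_prop
    · intro t ht
      rw [interior_Ici] at ht
      have ht' : 0 < t := ht
      have hd : HasDerivAt (fun t => Real.sinh t - t * Real.cosh t + (Real.sinh t) ^ 3 / 3)
          (Real.cosh t - (1 * Real.cosh t + t * Real.sinh t) +
            3 * Real.sinh t ^ 2 * Real.cosh t / 3) t := by
        exact ((Real.hasDerivAt_sinh t).sub
          ((hasDerivAt_id t).mul (Real.hasDerivAt_cosh t))).add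
          (((Real.hasDerivAt_sinh t).pow 3).div_const 3)
      rw [hd.deriv]
      have hs := Real.sinh_pos_iff.2 ht'
      -- sinh t * cosh t = sinh (2t) / 2 > t
      have h2 : 2 * t < Real.sinh (2 * t) := (Real.self_lt_sinh_iff.2 (by linarith))
      rw [Real.sinh_two_mul] at h2
      nlinarith
  have := h (Set.self_mem_Ici) (Set.mem_Ici.2 hx.le) hx
  simp at this
  linarith

/-- For every `x > 0`, `-1/3 < (1 - x coth x)/sinh² x < 0`,
where `coth x = cosh x / sinh x`. -/
theorem neg_third_lt_one_sub_mul_coth_div_sinh_sq_lt_zero (x : ℝ) (hx : 0 < x) :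
    -1/3 < (1 - x * (Real.cosh x / Real.sinh x)) / (Real.sinh x) ^ 2 ∧
    (1 - x * (Real.cosh x / Real.sinh x)) / (Real.sinh x) ^ 2 < 0 := by
  have hs : 0 < Real.sinh x := Real.sinh_pos_iff.2 hx
  have hs3 : 0 < Real.sinh x ^ 3 := by positivity
  have heq : (1 - x * (Real.cosh x / Real.sinh x)) / (Real.sinh x) ^ 2 =
      (Real.sinh x - x * Real.cosh x) / (Real.sinh x) ^ 3 := by
    have h1 : 1 - x * (Real.cosh x / Real.sinh x) = (Real.sinh x - x * Real.cosh x) / Real.sinh x := by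
      field_simp
    rw [h1, div_div, ← pow_succ']
  rw [heq]
  constructor
  · rw [lt_div_iff₀ hs3]
    have := key_pos hx
    nlinarith
  · exact div_neg_of_neg_of_pos (by linarith [sinh_lt_mul_cosh hx]) hs3
end

section
/- For every integer n ≥ 2 there exists a constant C(n) > 0 such that for all real x > 0, the quantity F_n(x) = 2(n−1)·((n−1) + (n−3)·(1 − x·coth x)/sinh²(x)) satisfies 0 < F_n(x) ≤ C(n). In fact one may take C(n) = max(2(n−1)², 4n(n−1)/3). -/
open Real

private lemma aux_sinh_lt (x : ℝ) (hx : 0 < x) : Real.sinh x < x * Real.cosh x := by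
  have hmono : StrictMonoOn (fun y : ℝ => y * Real.cosh y - Real.sinh y) (Set.Ici 0) := by
    apply strictMonoOn_of_deriv_pos (convex_Ici 0)
    · fun_prop
    · intro y hy
      rw [interior_Ici] at hy
      have hy' : (0:ℝ) < y := hy
      have hd : HasDerivAt (fun y : ℝ => y * Real.cosh y - Real.sinh y)
          (1 * Real.cosh y + y * Real.sinh y - Real.cosh y) y := by
        exact ((hasDerivAt_id y).mul (Real.hasDerivAt_cosh y)).sub (Real.hasDerivAt_sinh y)
      rw [hd.deriv]
      have := Real.sinh_pos_iff.2 hy'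
      nlinarith
  have := hmono (Set.self_mem_Ici) (Set.mem_Ici.2 hx.le) hx
  simp at this
  linarith

private lemma aux_sinh_cube (x : ℝ) (hx : 0 < x) :
    x * Real.cosh x - Real.sinh x < Real.sinh x ^ 3 / 3 := by
  have hmono : StrictMonoOn
      (fun y : ℝ => Real.sinh y ^ 3 / 3 + Real.sinh y - y * Real.cosh y) (Set.Ici 0) := by
    apply strictMonoOn_of_deriv_pos (convex_Ici 0)
    · fun_prop
    · intro y hy
      rw [interior_Ici] at hy
      have hy' : (0:ℝ) < y := hy
      have hd : HasDerivAt (fun y : ℝ => Real.sinh y ^ 3 / 3 + Real.sinh y - y * Real.cosh y)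
          ((3 * Real.sinh y ^ 2 * Real.cosh y) / 3 + Real.cosh y -
            (1 * Real.cosh y + y * Real.sinh y)) y := by
        exact ((((Real.hasDerivAt_sinh y).pow 3).div_const 3).add (Real.hasDerivAt_sinh y)).sub
          ((hasDerivAt_id y).mul (Real.hasDerivAt_cosh y))
      rw [hd.deriv]
      have hs := Real.sinh_pos_iff.2 hy'
      have h2 : 2 * y < Real.sinh (2 * y) := Real.self_lt_sinh_iff.2 (by linarith)
      rw [Real.sinh_two_mul] at h2
      nlinarith
  have := hmono (Set.self_mem_Ici) (Set.mem_Ici.2 hx.le) hx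
  simp at this
  linarith

/-- For every integer `n ≥ 2` there is a constant `C(n) > 0` (one may take
`C(n) = max (2(n-1)²) (4n(n-1)/3)`) such that for all `x > 0`,
`0 < F_n x ≤ C(n)`, where
`F_n x = 2 (n-1) ((n-1) + (n-3) (1 - x coth x)/sinh² x)` and
`coth x = cosh x / sinh x`. -/
theorem Fn_pos_and_uniformly_bounded (n : ℕ) (hn : 2 ≤ n) :
    0 < max (2 * ((n : ℝ) - 1) ^ 2) (4 * (n : ℝ) * ((n : ℝ) - 1) / 3) ∧
    ∀ x : ℝ, 0 < x →
      0 < 2 * ((n : ℝ) - 1) * (((n : ℝ) - 1) +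
          ((n : ℝ) - 3) * ((1 - x * (Real.cosh x / Real.sinh x)) / (Real.sinh x) ^ 2)) ∧
      2 * ((n : ℝ) - 1) * (((n : ℝ) - 1) +
          ((n : ℝ) - 3) * ((1 - x * (Real.cosh x / Real.sinh x)) / (Real.sinh x) ^ 2)) ≤
        max (2 * ((n : ℝ) - 1) ^ 2) (4 * (n : ℝ) * ((n : ℝ) - 1) / 3) := by
  have ha : (2 : ℝ) ≤ (n : ℝ) := by exact_mod_cast hn
  constructor
  · refine lt_max_of_lt_left ?_
    nlinarith
  intro x hx
  have hs : 0 < Real.sinh x := Real.sinh_pos_iff.2 hx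
  set g : ℝ := (1 - x * (Real.cosh x / Real.sinh x)) / (Real.sinh x) ^ 2 with hg
  have hgeq : g = (Real.sinh x - x * Real.cosh x) / Real.sinh x ^ 3 := by
    have h1 : 1 - x * (Real.cosh x / Real.sinh x) = (Real.sinh x - x * Real.cosh x) / Real.sinh x := by
      field_simp
    rw [hg, h1, div_div]
    congr 1
    ring
  have hgneg : g < 0 := by
    rw [hgeq]
    apply div_neg_of_neg_of_pos
    · linarith [aux_sinh_lt x hx]
    · positivity
  have hglb : -(1 / 3) < g := by
    rw [hgeq]
    rw [lt_div_iff₀ (by positivity)]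
    nlinarith [aux_sinh_cube x hx]
  by_cases h3 : 3 ≤ n
  · have ha3 : (3 : ℝ) ≤ (n : ℝ) := by exact_mod_cast h3
    have key : 0 < ((n:ℝ) - 1) + ((n:ℝ) - 3) * g := by
      nlinarith [mul_nonneg (by linarith : (0:ℝ) ≤ (n:ℝ) - 3) (by linarith : (0:ℝ) ≤ g + 1/3)]
    constructor
    · have : 0 < 2 * ((n:ℝ) - 1) := by linarith
      exact mul_pos this key
    · refine le_trans ?_ (le_max_left _ _)
      nlinarith [mul_nonneg (by linarith : (0:ℝ) ≤ (n:ℝ) - 1)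
        (mul_nonneg (by linarith : (0:ℝ) ≤ (n:ℝ) - 3) (by linarith : (0:ℝ) ≤ -g))]
  · have hn2 : n = 2 := by omega
    subst hn2
    constructor
    · push_cast
      nlinarith
    · refine le_trans ?_ (le_max_right _ _)
      push_cast
      nlinarith
end

section
/- Laplace asymptotics for the integral ∫_ℝ exp(−λ(e^u − u − 1)) du: as λ → +∞, √λ · ∫_ℝ exp(−λ·(exp(u) − u − 1)) du tends to √(2π). -/
/-!
Substituting `u = v / √λ` turns `√λ · ∫ exp (-λ h(u)) du`, with `h(u) = eᵘ - u - 1`, into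
`∫ exp (-λ h(v / √λ)) dv`. Since `h(t) = t²/2 + O(t³)` near `0`, the exponent `λ h(v / √λ)`
tends to `v²/2` pointwise, and for `λ ≥ 1` it is at least `v²/4` or `|v|/4` (the latter on the
far left, where `h` only grows linearly). Dominated convergence then gives the Gaussian integral
`∫ exp (-v²/2) dv = √(2π)`.
-/

open Filter Topology MeasureTheory Real

lemma abs_exp_sub_sub_one_sub_sq_div_two_le {t : ℝ} (ht : |t| ≤ 1) :
    |exp t - t - 1 - t ^ 2 / 2| ≤ 2 / 9 * |t| ^ 3 := by
  have h := exp_bound ht (n := 3) (by norm_num)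
  norm_num [Finset.sum_range_succ, Nat.factorial] at h
  rw [show exp t - t - 1 - t ^ 2 / 2 = exp t - (1 + t + t ^ 2 / 2) by ring]
  linarith

lemma sq_div_four_le_exp_sub_sub_one {t : ℝ} (ht : -1 ≤ t) : t ^ 2 / 4 ≤ exp t - t - 1 := by
  rcases le_or_gt 0 t with ht₀ | ht₀
  · nlinarith [quadratic_le_exp_of_nonneg ht₀, sq_nonneg t]
  · have h := abs_le.mp
      (abs_exp_sub_sub_one_sub_sq_div_two_le (abs_le.mpr ⟨ht, ht₀.le.trans zero_le_one⟩))
    have hcube : |t| ^ 3 ≤ t ^ 2 := by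
      rw [abs_of_neg ht₀]; nlinarith [sq_nonneg t]
    nlinarith

lemma neg_div_four_le_exp_sub_sub_one {t : ℝ} (ht : t ≤ -1) : -t / 4 ≤ exp t - t - 1 := by
  rcases le_or_gt t (-4 / 3) with ht' | ht'
  · linarith [exp_pos t]
  · have htangent : exp (-1) * (t + 2) ≤ exp t := by
      rw [show t = -1 + (t + 1) by ring, exp_add, show -1 + (t + 1) + 2 = t + 1 + 1 by ring]
      gcongr
      linarith [add_one_le_exp (t + 1)]
    nlinarith [exp_neg_one_gt_d9, exp_neg_one_lt_half]

lemma sq_div_four_le_or_abs_div_four_le_sq_mul_exp_sub_sub_one {s : ℝ} (hs : 1 ≤ s) (v : ℝ) :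
    v ^ 2 / 4 ≤ s ^ 2 * (exp (v / s) - v / s - 1) ∨
      |v| / 4 ≤ s ^ 2 * (exp (v / s) - v / s - 1) := by
  have hs₀ : 0 < s := zero_lt_one.trans_le hs
  obtain ⟨t, rfl⟩ : ∃ t, v = s * t := ⟨v / s, by field_simp⟩
  rw [mul_div_cancel_left₀ t hs₀.ne']
  rcases le_or_gt (-1) t with ht | ht
  · left
    have := mul_le_mul_of_nonneg_left (sq_div_four_le_exp_sub_sub_one ht) (sq_nonneg s)
    linarith [show (s * t) ^ 2 / 4 = s ^ 2 * (t ^ 2 / 4) by ring]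
  · right
    have := mul_le_mul_of_nonneg_left (neg_div_four_le_exp_sub_sub_one ht.le) (sq_nonneg s)
    rw [abs_of_neg (mul_neg_of_pos_of_neg hs₀ (by linarith))]
    nlinarith [mul_nonneg (mul_nonneg hs₀.le (sub_nonneg.mpr hs)) (show 0 ≤ -t by linarith)]

lemma exp_neg_sq_mul_exp_sub_sub_one_div_le {s : ℝ} (hs : 1 ≤ s) (v : ℝ) :
    exp (-s ^ 2 * (exp (v / s) - v / s - 1)) ≤ exp (-(1 / 4) * v ^ 2) + exp (-(1 / 4) * |v|) := by
  rcases sq_div_four_le_or_abs_div_four_le_sq_mul_exp_sub_sub_one hs v with h | h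
  · exact (exp_le_exp.mpr (by linarith)).trans (le_add_of_nonneg_right (exp_pos _).le)
  · exact (exp_le_exp.mpr (by linarith)).trans (le_add_of_nonneg_left (exp_pos _).le)

lemma tendsto_sq_mul_exp_sub_sub_one_div (v : ℝ) :
    Tendsto (fun s : ℝ => s ^ 2 * (exp (v / s) - v / s - 1)) atTop (𝓝 (v ^ 2 / 2)) := by
  have herr : Tendsto (fun s : ℝ => 2 / 9 * |v| ^ 3 / s) atTop (𝓝 0) :=
    tendsto_const_nhds.div_atTop tendsto_id
  refine tendsto_sub_nhds_zero_iff.mp (squeeze_zero_norm' ?_ herr)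
  filter_upwards [eventually_ge_atTop (max 1 |v|)] with s hs
  have hs₀ : 0 < s := zero_lt_one.trans_le ((le_max_left _ _).trans hs)
  have ht : |v / s| ≤ 1 := by
    rw [abs_div, abs_of_pos hs₀, div_le_one hs₀]; exact (le_max_right _ _).trans hs
  have hfactor : s ^ 2 * (exp (v / s) - v / s - 1) - v ^ 2 / 2 =
      s ^ 2 * (exp (v / s) - v / s - 1 - (v / s) ^ 2 / 2) := by
    field_simp
  calc ‖s ^ 2 * (exp (v / s) - v / s - 1) - v ^ 2 / 2‖
      = s ^ 2 * |exp (v / s) - v / s - 1 - (v / s) ^ 2 / 2| := by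
        rw [norm_eq_abs, hfactor, abs_mul, abs_of_pos (pow_pos hs₀ 2)]
    _ ≤ s ^ 2 * (2 / 9 * |v / s| ^ 3) := by
        gcongr; exact abs_exp_sub_sub_one_sub_sq_div_two_le ht
    _ = 2 / 9 * |v| ^ 3 / s := by
        rw [abs_div, abs_of_pos hs₀]; field_simp

lemma integrable_exp_neg_mul_abs {b : ℝ} (hb : 0 < b) :
    Integrable fun x : ℝ => exp (-b * |x|) := by
  have hright : Integrable ((Set.Ici 0).indicator fun x : ℝ => exp (-b * x)) :=
    (integrable_indicator_iff measurableSet_Ici).mpr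
      ((integrableOn_Ici_iff_integrableOn_Ioi (by finiteness)).mpr (exp_neg_integrableOn_Ioi 0 hb))
  refine (hright.add hright.comp_neg).mono' (by fun_prop) (ae_of_all _ fun x => ?_)
  rw [norm_of_nonneg (exp_pos _).le]
  rcases le_total 0 x with hx | hx
  · have : 0 ≤ Set.indicator (Set.Ici 0) (fun x : ℝ => exp (-b * x)) (-x) :=
      Set.indicator_nonneg (fun _ _ => (exp_pos _).le) _
    simp only [Pi.add_apply, Set.indicator_of_mem (Set.mem_Ici.mpr hx), abs_of_nonneg hx]
    linarith
  · have : 0 ≤ Set.indicator (Set.Ici 0) (fun x : ℝ => exp (-b * x)) x :=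
      Set.indicator_nonneg (fun _ _ => (exp_pos _).le) _
    simp only [Pi.add_apply, Set.indicator_of_mem (Set.mem_Ici.mpr (neg_nonneg.mpr hx)),
      abs_of_nonpos hx]
    linarith

lemma tendsto_mul_integral_exp_neg_sq_mul_exp_sub_sub_one :
    Tendsto (fun s : ℝ => s * ∫ u : ℝ, exp (-s ^ 2 * (exp u - u - 1))) atTop
      (𝓝 (√(2 * π))) := by
  have hgauss : ∫ v : ℝ, exp (-(1 / 2) * v ^ 2) = √(2 * π) := by
    rw [integral_gaussian]; congr 1; field_simp
  have hdominated : Tendsto (fun s : ℝ => ∫ v : ℝ, exp (-s ^ 2 * (exp (v / s) - v / s - 1)))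
      atTop (𝓝 (∫ v : ℝ, exp (-(1 / 2) * v ^ 2))) := by
    refine tendsto_integral_filter_of_dominated_convergence _
      (.of_forall fun s => by fun_prop) ?_
      ((integrable_exp_neg_mul_sq (b := 1 / 4) (by norm_num)).add
        (integrable_exp_neg_mul_abs (b := 1 / 4) (by norm_num)))
      (ae_of_all _ fun v => ?_)
    · filter_upwards [eventually_ge_atTop 1] with s hs
      exact ae_of_all _ fun v => by
        rw [norm_of_nonneg (exp_pos _).le]; exact exp_neg_sq_mul_exp_sub_sub_one_div_le hs v
    · rw [show -(1 / 2) * v ^ 2 = -(v ^ 2 / 2) by ring]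
      simpa only [neg_mul] using (tendsto_sq_mul_exp_sub_sub_one_div v).neg.rexp
  rw [← hgauss]
  refine hdominated.congr' ?_
  filter_upwards [eventually_gt_atTop 0] with s hs
  rw [Measure.integral_comp_div (fun u => exp (-s ^ 2 * (exp u - u - 1))), abs_of_pos hs,
    smul_eq_mul]

/-- **Laplace asymptotics**: `√λ · ∫_ℝ exp (-λ (e^u - u - 1)) du → √(2π)`
as `λ → +∞`. -/
theorem laplace_asymptotics_exp_sub_linear :
    Tendsto (fun lam : ℝ =>
        Real.sqrt lam * ∫ u : ℝ, Real.exp (-lam * (Real.exp u - u - 1)))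
      atTop (nhds (Real.sqrt (2 * Real.pi))) := by
  refine (tendsto_mul_integral_exp_neg_sq_mul_exp_sub_sub_one.comp tendsto_sqrt_atTop).congr' ?_
  filter_upwards [eventually_ge_atTop 0] with lam hlam
  simp only [Function.comp_apply, sq_sqrt hlam]
end

section
/- Logarithmic asymptotics of the Gaussian-weight superposition: for every σ > 0, the function J(ρ) = ∫_ℝ exp(2γρ² − σ·exp(2γ/σ)) dγ is finite for every ρ ≥ 1, and log J(ρ) / (ρ² · log ρ) tends to 2σ as ρ → +∞. -/
open Filter Topology MeasureTheory

/-!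
The exponent `a γ - b e^{c γ}` is concave; by `log x ≤ x - 1` its maximum is
`(a/c) (log (a/(bc)) - 1)`, attained at `γ₀ = log (a/(bc)) / c`. On `[γ₀ - 1, γ₀]` the exponent
is at least the maximum minus `a`, which bounds the integral from below. Writing the exponent as
`((a - 1) γ - (b/2) e^{c γ}) + (γ - (b/2) e^{c γ})` and bounding the first summand by its maximum
bounds the integral from above by a constant times `exp ((a/c) log (2a/(bc)))`. Both bounds are
`(a/c) log a + O(a)`, so `log ∫ ~ (a/c) log a`; the theorem is the case `a = 2ρ²`, `b = σ`,
`c = 2/σ`.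
-/

open Real Set Asymptotics

section

variable {a b c : ℝ}

theorem mul_sub_mul_exp_le {s β : ℝ} (hs : 0 < s) (hβ : 0 < β) (hc : 0 < c) (γ : ℝ) :
    s * γ - β * exp (c * γ) ≤ s / c * (log (s / (β * c)) - 1) := by
  have h := log_le_sub_one_of_pos (x := β * c * exp (c * γ) / s) (by positivity)
  rw [log_div (by positivity) hs.ne', log_mul (by positivity) (exp_pos _).ne', log_exp] at h
  rw [log_div hs.ne' (by positivity)]
  have := mul_le_mul_of_nonneg_left h (div_pos hs hc).le
  field_simp at this ⊢
  linarith

theorem integrable_exp_mul_sub_mul_exp (ha : 0 < a) (hb : 0 < b) (hc : 0 < c) :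
    Integrable fun γ => exp (a * γ - b * exp (c * γ)) := by
  refine (Continuous.locallyIntegrable (by fun_prop)).integrable_of_isBigO_atBot_atTop
    (g := fun γ => exp (a * γ)) ?_ ⟨Iic 0, Iic_mem_atBot 0, integrableOn_exp_mul_Iic ha 0⟩
    (g' := fun γ => exp (-a * γ)) ?_
    ⟨Ioi 0, Ioi_mem_atTop 0, integrableOn_exp_mul_Ioi (by linarith) 0⟩
  · refine isBigO_of_le _ fun γ => ?_
    simp only [norm_eq_abs, abs_exp, exp_le_exp]
    nlinarith [exp_pos (c * γ)]
  · refine isBigO_of_le' (c := exp (2 * a / c * (log (2 * a / (b * c)) - 1))) _ fun γ => ?_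
    simp only [norm_eq_abs, abs_exp, ← exp_add, exp_le_exp]
    linarith [mul_sub_mul_exp_le (by linarith : 0 < 2 * a) hb hc γ]

theorem exp_le_integral_exp_mul_sub_mul_exp (ha : 0 < a) (hb : 0 < b) (hc : 0 < c) :
    exp (a / c * (log (a / (b * c)) - 1) - a) ≤ ∫ γ, exp (a * γ - b * exp (c * γ)) := by
  set γ₀ := log (a / (b * c)) / c
  have hγ₀ : b * exp (c * γ₀) = a / c := by
    rw [mul_div_cancel₀ _ hc.ne', exp_log (by positivity)]
    field_simp
  have hbound : ∀ γ ∈ Icc (γ₀ - 1) γ₀,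
      a / c * (log (a / (b * c)) - 1) - a ≤ a * γ - b * exp (c * γ) := by
    rintro γ ⟨hγ₁, hγ₂⟩
    have : b * exp (c * γ) ≤ b * exp (c * γ₀) := by gcongr
    have : a * (γ₀ - 1) ≤ a * γ := by gcongr
    have : a / c * log (a / (b * c)) = a * γ₀ := by ring
    linarith
  have hint := integrable_exp_mul_sub_mul_exp ha hb hc
  calc exp (a / c * (log (a / (b * c)) - 1) - a)
      = exp (a / c * (log (a / (b * c)) - 1) - a) * volume.real (Icc (γ₀ - 1) γ₀) := by simp
    _ ≤ ∫ γ in Icc (γ₀ - 1) γ₀, exp (a * γ - b * exp (c * γ)) :=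
      setIntegral_ge_of_const_le_real measurableSet_Icc (by simp)
        (fun γ hγ => exp_le_exp.2 (hbound γ hγ)) hint.integrableOn
    _ ≤ ∫ γ, exp (a * γ - b * exp (c * γ)) :=
      setIntegral_le_integral hint (.of_forall fun _ => (exp_pos _).le)

theorem integral_exp_mul_sub_mul_exp_le (ha : 1 < a) (hb : 0 < b) (hc : 0 < c)
    (hbca : b / 2 * c ≤ a) :
    ∫ γ, exp (a * γ - b * exp (c * γ)) ≤
      exp (a / c * log (a / (b / 2 * c))) * ∫ γ, exp (1 * γ - b / 2 * exp (c * γ)) := by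
  have hM : (a - 1) / c * (log ((a - 1) / (b / 2 * c)) - 1) ≤ a / c * log (a / (b / 2 * c)) := by
    have hlog : log ((a - 1) / (b / 2 * c)) ≤ log (a / (b / 2 * c)) :=
      log_le_log (div_pos (by linarith) (by positivity)) (by gcongr; linarith)
    have hlog₀ : 0 ≤ log (a / (b / 2 * c)) := log_nonneg ((one_le_div (by positivity)).2 hbca)
    calc (a - 1) / c * (log ((a - 1) / (b / 2 * c)) - 1)
        ≤ (a - 1) / c * log (a / (b / 2 * c)) :=
          mul_le_mul_of_nonneg_left (by linarith) (div_nonneg (by linarith) hc.le)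
      _ ≤ a / c * log (a / (b / 2 * c)) := by gcongr; linarith
  rw [← integral_const_mul]
  refine integral_mono (integrable_exp_mul_sub_mul_exp (by linarith) hb hc)
    ((integrable_exp_mul_sub_mul_exp one_pos (by positivity) hc).const_mul _) fun γ => ?_
  rw [← exp_add, exp_le_exp]
  linarith [mul_sub_mul_exp_le (by linarith : 0 < a - 1) (by positivity : 0 < b / 2) hc γ]

end

theorem tendsto_mul_log_div_add_div_mul_log (κ d p q : ℝ) (hd : d ≠ 0) :
    Tendsto (fun x => (κ * x * log (x / d) + p * x + q) / (x * log x)) atTop (𝓝 κ) := by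
  have hlog := tendsto_log_atTop.inv_tendsto_atTop
  have hlim : Tendsto (fun x => κ + (p - κ * log d) * (log x)⁻¹ + q * (x * log x)⁻¹) atTop
      (𝓝 (κ + (p - κ * log d) * 0 + q * 0)) :=
    (tendsto_const_nhds.add (hlog.const_mul _)).add
      ((tendsto_id.atTop_mul_atTop₀ tendsto_log_atTop).inv_tendsto_atTop.const_mul _)
  rw [mul_zero, mul_zero, add_zero, add_zero] at hlim
  refine hlim.congr' ?_
  filter_upwards [eventually_gt_atTop 1] with x hx
  have : log x ≠ 0 := (log_pos hx).ne'
  rw [log_div (by positivity) hd]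
  field_simp
  ring

theorem tendsto_log_integral_exp_mul_sub_mul_exp {b c : ℝ} (hb : 0 < b) (hc : 0 < c) :
    Tendsto (fun a => log (∫ γ, exp (a * γ - b * exp (c * γ))) / (a * log a)) atTop
      (𝓝 (1 / c)) := by
  have hF : ∀ᶠ a in atTop, 0 < a * log a ∧ 0 < ∫ γ, exp (a * γ - b * exp (c * γ)) := by
    filter_upwards [eventually_gt_atTop 1] with a ha
    exact ⟨mul_pos (by linarith) (log_pos ha),
      integral_exp_pos (integrable_exp_mul_sub_mul_exp (by linarith) hb hc)⟩
  refine tendsto_of_tendsto_of_tendsto_of_le_of_le'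
    (tendsto_mul_log_div_add_div_mul_log (1 / c) (b * c) (-(1 / c) - 1) 0 (by positivity))
    (tendsto_mul_log_div_add_div_mul_log (1 / c) (b / 2 * c) 0
      (log (∫ γ, exp (1 * γ - b / 2 * exp (c * γ)))) (by positivity)) ?_ ?_
  · filter_upwards [hF, eventually_gt_atTop 0] with a ⟨hden, hpos⟩ ha
    have := (le_log_iff_exp_le hpos).2 (exp_le_integral_exp_mul_sub_mul_exp ha hb hc)
    exact div_le_div_of_nonneg_right (by linear_combination this) hden.le
  · filter_upwards [hF, eventually_gt_atTop 1, eventually_ge_atTop (b / 2 * c)]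
      with a ⟨hden, hpos⟩ ha hbca
    have hG := integral_exp_pos (μ := volume)
      (integrable_exp_mul_sub_mul_exp one_pos (by positivity : 0 < b / 2) hc)
    have := log_le_log hpos (integral_exp_mul_sub_mul_exp_le ha hb hc hbca)
    rw [log_mul (exp_pos _).ne' hG.ne', log_exp] at this
    exact div_le_div_of_nonneg_right (by linear_combination this) hden.le

theorem tendsto_log_mul_pow_div_log {d : ℝ} (hd : d ≠ 0) (n : ℕ) :
    Tendsto (fun x => log (d * x ^ n) / log x) atTop (𝓝 n) := by
  have hlim : Tendsto (fun x => n + log d * (log x)⁻¹) atTop (𝓝 (n + log d * 0)) :=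
    tendsto_const_nhds.add (tendsto_log_atTop.inv_tendsto_atTop.const_mul _)
  rw [mul_zero, add_zero] at hlim
  refine hlim.congr' ?_
  filter_upwards [eventually_gt_atTop 1] with x hx
  have : log x ≠ 0 := (log_pos hx).ne'
  rw [log_mul hd (by positivity), log_pow]
  field_simp
  ring

/-- **Logarithmic asymptotics of the Gaussian-weight superposition**: for
`σ > 0`, the integral `J ρ = ∫_ℝ exp (2γρ² - σ e^{2γ/σ}) dγ` is finite for
every `ρ ≥ 1`, and `log (J ρ) / (ρ² log ρ) → 2σ` as `ρ → +∞`. -/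
theorem gaussian_weight_superposition_log_asymptotics (σ : ℝ) (hσ : 0 < σ) :
    (∀ ρ : ℝ, 1 ≤ ρ →
      Integrable (fun γ : ℝ => Real.exp (2 * γ * ρ ^ 2 - σ * Real.exp (2 * γ / σ)))) ∧
    Tendsto (fun ρ : ℝ =>
        Real.log (∫ γ : ℝ, Real.exp (2 * γ * ρ ^ 2 - σ * Real.exp (2 * γ / σ))) /
          (ρ ^ 2 * Real.log ρ))
      atTop (nhds (2 * σ)) := by
  have hJ : ∀ ρ : ℝ, (fun γ => exp (2 * γ * ρ ^ 2 - σ * exp (2 * γ / σ))) =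
      fun γ => exp (2 * ρ ^ 2 * γ - σ * exp (2 / σ * γ)) := fun ρ => by ext γ; ring_nf
  refine ⟨fun ρ hρ => hJ ρ ▸ integrable_exp_mul_sub_mul_exp (by positivity) hσ (by positivity), ?_⟩
  have hF := (tendsto_log_integral_exp_mul_sub_mul_exp hσ (div_pos two_pos hσ)).comp
    ((tendsto_pow_atTop two_ne_zero).const_mul_atTop two_pos)
  have hlim := (hF.const_mul 2).mul (tendsto_log_mul_pow_div_log two_ne_zero 2)
  rw [show 2 * (1 / (2 / σ)) * ((2 : ℕ) : ℝ) = 2 * σ by field_simp; norm_num] at hlim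
  refine hlim.congr' ?_
  filter_upwards [eventually_gt_atTop 1] with ρ hρ
  have : log ρ ≠ 0 := (log_pos hρ).ne'
  have : log (2 * ρ ^ 2) ≠ 0 := (log_pos (by nlinarith)).ne'
  simp only [Function.comp_apply, hJ]
  field_simp
end

section
/- Abstract logarithmic convexity (Hilbert-space form of the Escauriaza–Kenig–Ponce–Vega lemma): there exists a universal constant N ≥ 0 with the following property. Let E be a complex Hilbert space, let f : [0,1] → E be continuously differentiable, let S : [0,1] → (continuous linear endomorphisms of E) be continuously differentiable with S(t) self-adjoint for every t, let A : [0,1] → (continuous linear endomorphisms of E) be continuous with A(t) skew-adjoint for every t, and let M₀, M₁ ≥ 0 be reals. Assume: (i) ‖f'(t) − S(t)(f(t)) − A(t)(f(t))‖ ≤ M₁·‖f(t)‖ for all t ∈ [0,1]; (ii) Re⟪S'(t)(v) + (S(t)∘A(t) − A(t)∘S(t))(v), v⟫ ≥ −M₀·‖v‖² for all t ∈ [0,1] and all v ∈ E. Then for every t ∈ [0,1], ‖f(t)‖² ≤ exp(N·(M₀ + M₁ + M₁²)) · ‖f(0)‖^{2(1−t)} · ‖f(1)‖^{2t}. -/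
/-!
Write `H = ‖f‖²` and `D = ⟪S f, f⟫`. Skewness of `A` gives `H' = 2 D + O(M₁ H)`, and differentiating
`D` produces the commutator, so the coercivity bound and Cauchy–Schwarz applied to the component of
`S f` orthogonal to `f` give `(D / H)' ≥ -(M₀ + M₁² / 2)`: Almgren's frequency `D / H` is almost
increasing. Hence `(log H)'` stays within `2 M₁` of an almost increasing function, and comparing it
on `[0, t]` and on `[t, 1]` with its value at `t` bounds `log H t` by the linear interpolation of
`log H 0` and `log H 1`, up to the error. If `f` vanishes at one point, Gronwall forces `f ≡ 0`.
Only real parts of inner products occur, so everything happens in the underlying real space.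
-/

open Set Real
open scoped InnerProductSpace

section Scalar

variable {g g' : ℝ → ℝ} {s : Set ℝ}

theorem monotoneOn_of_forall_hasDerivWithinAt_nonneg (hs : Convex ℝ s)
    (hg : ∀ x ∈ s, HasDerivWithinAt g (g' x) s x) (hg' : ∀ x ∈ s, 0 ≤ g' x) :
    MonotoneOn g s :=
  monotoneOn_of_hasDerivWithinAt_nonneg hs (fun x hx => (hg x hx).continuousWithinAt)
    (fun x hx => (hg x (interior_subset hx)).mono interior_subset)
    (fun x hx => hg' x (interior_subset hx))

theorem antitoneOn_of_forall_hasDerivWithinAt_nonpos (hs : Convex ℝ s)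
    (hg : ∀ x ∈ s, HasDerivWithinAt g (g' x) s x) (hg' : ∀ x ∈ s, g' x ≤ 0) :
    AntitoneOn g s :=
  antitoneOn_of_hasDerivWithinAt_nonpos hs (fun x hx => (hg x hx).continuousWithinAt)
    (fun x hx => (hg x (interior_subset hx)).mono interior_subset)
    (fun x hx => hg' x (interior_subset hx))

/-- Gronwall: `e^{Kx} u` increases and `e^{-Kx} u` decreases, so a zero propagates both ways. -/
theorem eqOn_zero_of_abs_deriv_le_mul {u u' : ℝ → ℝ} {K x₀ : ℝ} (hs : Convex ℝ s)
    (hu : ∀ x ∈ s, HasDerivWithinAt u (u' x) s x) (hu₀ : ∀ x ∈ s, 0 ≤ u x)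
    (hK : ∀ x ∈ s, |u' x| ≤ K * u x) (hx₀ : x₀ ∈ s) (hzero : u x₀ = 0) :
    EqOn u 0 s := by
  have hexp (c x : ℝ) : HasDerivWithinAt (fun y => exp (c * y)) (exp (c * x) * c) s x := by
    simpa using ((hasDerivAt_id x).const_mul c).exp.hasDerivWithinAt
  have hup : MonotoneOn (fun x => exp (K * x) * u x) s :=
    monotoneOn_of_forall_hasDerivWithinAt_nonneg hs (fun x hx => (hexp K x).mul (hu x hx))
      fun x hx => by nlinarith [exp_pos (K * x), neg_abs_le (u' x), hK x hx]
  have hdown : AntitoneOn (fun x => exp (-K * x) * u x) s :=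
    antitoneOn_of_forall_hasDerivWithinAt_nonpos hs (fun x hx => (hexp (-K) x).mul (hu x hx))
      fun x hx => by nlinarith [exp_pos (-K * x), le_abs_self (u' x), hK x hx]
  intro x hx
  show u x = 0
  refine le_antisymm ?_ (hu₀ x hx)
  rcases le_total x x₀ with hle | hle
  · have := hup hx hx₀ hle
    simp only [hzero, mul_zero] at this
    nlinarith [exp_pos (K * x)]
  · have := hdown hx₀ hx hle
    simp only [hzero, mul_zero] at this
    nlinarith [exp_pos (-K * x)]

theorem le_interpolation_of_abs_deriv_sub_le {ψ : ℝ → ℝ} {ε t : ℝ}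
    (hg : ∀ x ∈ Icc (0 : ℝ) 1, HasDerivWithinAt g (g' x) (Icc 0 1) x)
    (hψ : MonotoneOn ψ (Icc 0 1)) (hgψ : ∀ x ∈ Icc (0 : ℝ) 1, |g' x - ψ x| ≤ ε)
    (ht : t ∈ Icc (0 : ℝ) 1) :
    g t ≤ (1 - t) * g 0 + t * g 1 + 2 * ε * (t * (1 - t)) := by
  obtain ⟨ht₀, ht₁⟩ := ht
  have hleft : Icc 0 t ⊆ Icc (0 : ℝ) 1 := Icc_subset_Icc_right ht₁
  have hright : Icc t 1 ⊆ Icc (0 : ℝ) 1 := Icc_subset_Icc_left ht₀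
  have hshift (c : ℝ) {J : Set ℝ} (hJ : J ⊆ Icc 0 1) (x) (hx : x ∈ J) :
      HasDerivWithinAt (fun y => g y - c * y) (g' x - c * 1) J x :=
    ((hg x (hJ hx)).mono hJ).sub ((hasDerivWithinAt_id x J).const_mul c)
  have hbefore : g t - (ψ t + ε) * t ≤ g 0 := by
    have h := antitoneOn_of_forall_hasDerivWithinAt_nonpos (convex_Icc 0 t)
      (hshift (ψ t + ε) hleft) fun x hx => by
        linarith [hψ (hleft hx) ⟨ht₀, ht₁⟩ hx.2, (abs_le.1 (hgψ x (hleft hx))).2]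
    simpa using h (left_mem_Icc.2 ht₀) (right_mem_Icc.2 ht₀) ht₀
  have hafter : g t - (ψ t - ε) * t ≤ g 1 - (ψ t - ε) := by
    have h := monotoneOn_of_forall_hasDerivWithinAt_nonneg (convex_Icc t 1)
      (hshift (ψ t - ε) hright) fun x hx => by
        linarith [hψ ⟨ht₀, ht₁⟩ (hright hx) hx.1, (abs_le.1 (hgψ x (hright hx))).1]
    simpa using h (left_mem_Icc.2 ht₁) (right_mem_Icc.2 ht₁) ht₁
  nlinarith [mul_le_mul_of_nonneg_left hbefore (sub_nonneg.2 ht₁),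
    mul_le_mul_of_nonneg_left hafter ht₀]

end Scalar

section Frequency

variable {H H' D D' : ℝ → ℝ} {C M t : ℝ}

/-- Almgren's frequency `D / H`, corrected by `C x`, is monotone, and `(log H)' = 2 D / H` up to
an error `2 M`; the quadratic `C x²` absorbs the correction. -/
theorem log_le_interpolation_of_frequency
    (hH : ∀ x ∈ Icc (0 : ℝ) 1, HasDerivWithinAt H (H' x) (Icc 0 1) x)
    (hD : ∀ x ∈ Icc (0 : ℝ) 1, HasDerivWithinAt D (D' x) (Icc 0 1) x)
    (hpos : ∀ x ∈ Icc (0 : ℝ) 1, 0 < H x)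
    (hHD : ∀ x ∈ Icc (0 : ℝ) 1, |H' x - 2 * D x| ≤ 2 * M * H x)
    (hfreq : ∀ x ∈ Icc (0 : ℝ) 1, -(C * H x ^ 2) ≤ D' x * H x - D x * H' x)
    (ht : t ∈ Icc (0 : ℝ) 1) :
    log (H t) ≤ (1 - t) * log (H 0) + t * log (H 1) + (C + 4 * M) * (t * (1 - t)) := by
  have hmono : MonotoneOn (fun x => 2 * (D x / H x + C * x)) (Icc 0 1) := by
    refine monotoneOn_of_forall_hasDerivWithinAt_nonneg (convex_Icc 0 1)
      (fun x hx => (((hD x hx).div (hH x hx) (hpos x hx).ne').add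
        ((hasDerivWithinAt_id x _).const_mul C)).const_mul 2) fun x hx => ?_
    have hH2 : 0 < H x ^ 2 := pow_pos (hpos x hx) 2
    have : -C ≤ (D' x * H x - D x * H' x) / H x ^ 2 := by
      rw [le_div_iff₀ hH2]; linarith [hfreq x hx]
    linarith
  have hlog (x) (hx : x ∈ Icc (0 : ℝ) 1) : HasDerivWithinAt (fun y => log (H y) + C * y ^ 2)
      (H' x / H x + C * (2 * x)) (Icc 0 1) x :=
    ((hH x hx).log (hpos x hx).ne').add (by simpa using (hasDerivWithinAt_pow 2 x).const_mul C)
  have hclose (x) (hx : x ∈ Icc (0 : ℝ) 1) :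
      |H' x / H x + C * (2 * x) - 2 * (D x / H x + C * x)| ≤ 2 * M := by
    have hHx := hpos x hx
    have : H' x / H x + C * (2 * x) - 2 * (D x / H x + C * x) = (H' x - 2 * D x) / H x := by
      field_simp; ring
    rw [this, abs_div, abs_of_pos hHx, div_le_iff₀ hHx]
    linarith [hHD x hx]
  linarith [le_interpolation_of_abs_deriv_sub_le hlog hmono hclose ht]

theorem le_exp_mul_rpow_of_frequency {K : ℝ}
    (hH : ∀ x ∈ Icc (0 : ℝ) 1, HasDerivWithinAt H (H' x) (Icc 0 1) x)
    (hD : ∀ x ∈ Icc (0 : ℝ) 1, HasDerivWithinAt D (D' x) (Icc 0 1) x)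
    (hnonneg : ∀ x ∈ Icc (0 : ℝ) 1, 0 ≤ H x)
    (hDH : ∀ x ∈ Icc (0 : ℝ) 1, |D x| ≤ K * H x)
    (hHD : ∀ x ∈ Icc (0 : ℝ) 1, |H' x - 2 * D x| ≤ 2 * M * H x)
    (hfreq : ∀ x ∈ Icc (0 : ℝ) 1, -(C * H x ^ 2) ≤ D' x * H x - D x * H' x)
    (ht : t ∈ Icc (0 : ℝ) 1) :
    H t ≤ exp ((C + 4 * M) * (t * (1 - t))) * H 0 ^ (1 - t) * H 1 ^ t := by
  by_cases hzero : ∃ x₀ ∈ Icc (0 : ℝ) 1, H x₀ = 0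
  · obtain ⟨x₀, hx₀, hHx₀⟩ := hzero
    have hH' (x) (hx : x ∈ Icc (0 : ℝ) 1) : |H' x| ≤ 2 * (K + M) * H x := by
      have := abs_sub_le (H' x) (2 * D x) 0
      rw [sub_zero, sub_zero, abs_mul, abs_two] at this
      linarith [hHD x hx, hDH x hx]
    rw [eqOn_zero_of_abs_deriv_le_mul (convex_Icc 0 1) hH hnonneg hH' hx₀ hHx₀ ht]
    exact mul_nonneg (mul_nonneg (exp_pos _).le (rpow_nonneg (hnonneg 0 ⟨le_rfl, zero_le_one⟩) _))
      (rpow_nonneg (hnonneg 1 ⟨zero_le_one, le_rfl⟩) _)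
  push Not at hzero
  have hpos (x) (hx : x ∈ Icc (0 : ℝ) 1) : 0 < H x := (hnonneg x hx).lt_of_ne' (hzero x hx)
  have hlog := log_le_interpolation_of_frequency hH hD hpos hHD hfreq ht
  calc H t = exp (log (H t)) := (exp_log (hpos t ht)).symm
    _ ≤ exp ((C + 4 * M) * (t * (1 - t)) + log (H 0) * (1 - t) + log (H 1) * t) :=
      exp_le_exp.2 (by linarith)
    _ = _ := by
      rw [rpow_def_of_pos (hpos 0 ⟨le_rfl, zero_le_one⟩),
        rpow_def_of_pos (hpos 1 ⟨zero_le_one, le_rfl⟩), exp_add, exp_add]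

end Frequency

section InnerProduct

variable {F : Type*} [NormedAddCommGroup F] [InnerProductSpace ℝ F]

theorem inner_commutator_apply_self {S A : F →L[ℝ] F} (hS : ∀ v w, ⟪S v, w⟫_ℝ = ⟪v, S w⟫_ℝ)
    (hA : ∀ v w, ⟪A v, w⟫_ℝ = -⟪v, A w⟫_ℝ) (v : F) :
    ⟪S (A v) - A (S v), v⟫_ℝ = 2 * ⟪S v, A v⟫_ℝ := by
  rw [inner_sub_left, hS (A v), hA (S v), real_inner_comm (S v)]
  ring

theorem abs_two_inner_sub_two_inner_le {v v' a b : F} {M : ℝ} (hb : ⟪b, v⟫_ℝ = 0)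
    (hv' : ‖v' - a - b‖ ≤ M * ‖v‖) :
    |2 * ⟪v, v'⟫_ℝ - 2 * ⟪a, v⟫_ℝ| ≤ 2 * M * ‖v‖ ^ 2 := by
  have h : ⟪v, v'⟫_ℝ - ⟪a, v⟫_ℝ = ⟪v, v' - a - b⟫_ℝ := by
    rw [inner_sub_right, inner_sub_right, real_inner_comm a, real_inner_comm b, hb, sub_zero]
  rw [← mul_sub, h, abs_mul, abs_two]
  nlinarith [abs_real_inner_le_norm v (v' - a - b), mul_le_mul_of_nonneg_left hv' (norm_nonneg v)]

/-- With `u = ‖v‖² a - ⟪a, v⟫ v`, the right-hand side times `‖v‖²` is `2‖u‖² + 2‖v‖² ⟪u, g⟫`, and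
`2‖u‖² - 2‖u‖ (M ‖v‖³) ≥ -M² ‖v‖⁶ / 2`. -/
theorem neg_le_two_gram_add_two_inner (a v g : F) {M : ℝ} (hg : ‖g‖ ≤ M * ‖v‖) :
    -(M ^ 2 / 2 * (‖v‖ ^ 2) ^ 2) ≤
      2 * (‖v‖ ^ 2 * ‖a‖ ^ 2 - ⟪a, v⟫_ℝ ^ 2) + 2 * (‖v‖ ^ 2 * ⟪a, g⟫_ℝ - ⟪a, v⟫_ℝ * ⟪v, g⟫_ℝ) := by
  rcases eq_or_ne v 0 with rfl | hv
  · simp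
  have hH : 0 < ‖v‖ ^ 2 := by positivity
  set u := ‖v‖ ^ 2 • a - ⟪a, v⟫_ℝ • v
  have hu : ‖u‖ ^ 2 = ‖v‖ ^ 2 * (‖v‖ ^ 2 * ‖a‖ ^ 2 - ⟪a, v⟫_ℝ ^ 2) := by
    rw [norm_sub_sq_real, norm_smul, norm_smul, real_inner_smul_left, real_inner_smul_right,
      Real.norm_eq_abs, Real.norm_eq_abs, abs_of_pos hH]
    ring_nf
    rw [sq_abs]
    ring
  have hug : ⟪u, g⟫_ℝ = ‖v‖ ^ 2 * ⟪a, g⟫_ℝ - ⟪a, v⟫_ℝ * ⟪v, g⟫_ℝ := by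
    rw [inner_sub_left, real_inner_smul_left, real_inner_smul_left]
  have hCS : -(‖u‖ * (M * ‖v‖)) ≤ ⟪u, g⟫_ℝ := by
    linarith [neg_abs_le ⟪u, g⟫_ℝ, abs_real_inner_le_norm u g,
      mul_le_mul_of_nonneg_left hg (norm_nonneg u)]
  rw [← hug]
  refine le_of_mul_le_mul_left ?_ hH
  nlinarith [sq_nonneg (2 * ‖u‖ - M * ‖v‖ * ‖v‖ ^ 2), mul_le_mul_of_nonneg_left hCS hH.le]

theorem inner_apply_self_eq_zero_of_skew {A : F →L[ℝ] F} (hA : ∀ v w, ⟪A v, w⟫_ℝ = -⟪v, A w⟫_ℝ)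
    (v : F) : ⟪A v, v⟫_ℝ = 0 := by
  have := hA v v
  rw [real_inner_comm (A v)] at this
  linarith

theorem neg_le_frequency_deriv {S S' A : F →L[ℝ] F} {v v' : F} {M₀ M₁ : ℝ}
    (hS : ∀ v w, ⟪S v, w⟫_ℝ = ⟪v, S w⟫_ℝ) (hA : ∀ v w, ⟪A v, w⟫_ℝ = -⟪v, A w⟫_ℝ)
    (hv' : ‖v' - S v - A v‖ ≤ M₁ * ‖v‖)
    (hcoer : -M₀ * ‖v‖ ^ 2 ≤ ⟪S' v + (S (A v) - A (S v)), v⟫_ℝ) :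
    -((M₀ + M₁ ^ 2 / 2) * (‖v‖ ^ 2) ^ 2) ≤
      (⟪S' v, v⟫_ℝ + 2 * ⟪S v, v'⟫_ℝ) * ‖v‖ ^ 2 - ⟪S v, v⟫_ℝ * (2 * ⟪v, v'⟫_ℝ) := by
  set g := v' - S v - A v
  have hv'g : v' = S v + A v + g := by simp [g]
  rw [inner_add_left, inner_commutator_apply_self hS hA] at hcoer
  have hgram := neg_le_two_gram_add_two_inner (S v) v g hv'
  rw [hv'g, inner_add_right, inner_add_right, inner_add_right, inner_add_right,
    real_inner_self_eq_norm_sq, real_inner_comm (S v) v, real_inner_comm (A v) v,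
    inner_apply_self_eq_zero_of_skew hA]
  linarith [mul_le_mul_of_nonneg_right hcoer (sq_nonneg ‖v‖)]

theorem HasDerivWithinAt.inner_apply_self {S : ℝ → F →L[ℝ] F} {S' : F →L[ℝ] F} {f : ℝ → F}
    {f' : F} {s : Set ℝ} {x : ℝ} (hS : HasDerivWithinAt S S' s x) (hf : HasDerivWithinAt f f' s x)
    (hsymm : ∀ v w, ⟪S x v, w⟫_ℝ = ⟪v, S x w⟫_ℝ) :
    HasDerivWithinAt (fun y => ⟪S y (f y), f y⟫_ℝ)
      (⟪S' (f x), f x⟫_ℝ + 2 * ⟪S x (f x), f'⟫_ℝ) s x := by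
  refine ((hS.clm_apply hf).inner ℝ hf).congr_deriv ?_
  rw [inner_add_left, hsymm f', real_inner_comm (S x (f x)) f']
  ring

theorem norm_sq_le_exp_mul_rpow {f f' : ℝ → F} {S S' A : ℝ → F →L[ℝ] F} {M₀ M₁ t : ℝ}
    (hf : ∀ t ∈ Icc (0 : ℝ) 1, HasDerivWithinAt f (f' t) (Icc 0 1) t)
    (hS : ∀ t ∈ Icc (0 : ℝ) 1, HasDerivWithinAt S (S' t) (Icc 0 1) t)
    (hSsymm : ∀ t ∈ Icc (0 : ℝ) 1, ∀ v w, ⟪S t v, w⟫_ℝ = ⟪v, S t w⟫_ℝ)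
    (hAskew : ∀ t ∈ Icc (0 : ℝ) 1, ∀ v w, ⟪A t v, w⟫_ℝ = -⟪v, A t w⟫_ℝ)
    (hf' : ∀ t ∈ Icc (0 : ℝ) 1, ‖f' t - S t (f t) - A t (f t)‖ ≤ M₁ * ‖f t‖)
    (hcoer : ∀ t ∈ Icc (0 : ℝ) 1, ∀ v,
      -M₀ * ‖v‖ ^ 2 ≤ ⟪S' t v + (S t (A t v) - A t (S t v)), v⟫_ℝ)
    (ht : t ∈ Icc (0 : ℝ) 1) :
    ‖f t‖ ^ 2 ≤ exp ((M₀ + M₁ ^ 2 / 2 + 4 * M₁) * (t * (1 - t))) *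
      ‖f 0‖ ^ (2 * (1 - t)) * ‖f 1‖ ^ (2 * t) := by
  obtain ⟨K, hK⟩ := isCompact_Icc.exists_bound_of_continuousOn
    fun x hx => (hS x hx).continuousWithinAt
  have hSf (x) (hx : x ∈ Icc (0 : ℝ) 1) : |⟪S x (f x), f x⟫_ℝ| ≤ K * ‖f x‖ ^ 2 :=
    (abs_real_inner_le_norm _ _).trans <| by
      nlinarith [(S x).le_opNorm (f x), hK x hx, norm_nonneg (f x), norm_nonneg (S x (f x))]
  have key := le_exp_mul_rpow_of_frequency (fun x hx => (hf x hx).norm_sq)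
    (fun x hx => (hS x hx).inner_apply_self (hf x hx) (hSsymm x hx)) (fun x _ => by positivity)
    hSf (fun x hx => abs_two_inner_sub_two_inner_le
      (inner_apply_self_eq_zero_of_skew (hAskew x hx) (f x)) (hf' x hx))
    (fun x hx => neg_le_frequency_deriv (hSsymm x hx) (hAskew x hx) (hf' x hx) (hcoer x hx (f x)))
    ht
  rwa [← rpow_natCast_mul (norm_nonneg _), ← rpow_natCast_mul (norm_nonneg _)] at key

end InnerProduct

/-- **Abstract logarithmic convexity** (Hilbert-space form of the
Escauriaza–Kenig–Ponce–Vega lemma).  There is a universal constant `N ≥ 0`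
such that: for any complex Hilbert space `E`, any `C¹` function
`f : [0,1] → E` (derivative `f'`), any `C¹` family `S` of self-adjoint
bounded operators (derivative `S'`), any continuous family `A` of
skew-adjoint bounded operators and `M₀, M₁ ≥ 0` satisfying
`‖f' t - S t (f t) - A t (f t)‖ ≤ M₁ ‖f t‖` and the coercivity
`Re ⟪S' t v + [S t, A t] v, v⟫ ≥ -M₀ ‖v‖²`, one has for all `t ∈ [0,1]`
`‖f t‖² ≤ exp (N (M₀ + M₁ + M₁²)) ‖f 0‖^{2(1-t)} ‖f 1‖^{2t}`. -/
theorem abstract_logarithmic_convexity :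
    ∃ N : ℝ, 0 ≤ N ∧
      ∀ (E : Type) [NormedAddCommGroup E] [InnerProductSpace ℂ E] [CompleteSpace E]
        (f f' : ℝ → E) (S S' A : ℝ → E →L[ℂ] E) (M₀ M₁ : ℝ),
        0 ≤ M₀ → 0 ≤ M₁ →
        (∀ t ∈ Set.Icc (0 : ℝ) 1, HasDerivWithinAt f (f' t) (Set.Icc (0 : ℝ) 1) t) →
        ContinuousOn f' (Set.Icc (0 : ℝ) 1) →
        (∀ t ∈ Set.Icc (0 : ℝ) 1, HasDerivWithinAt S (S' t) (Set.Icc (0 : ℝ) 1) t) →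
        ContinuousOn S' (Set.Icc (0 : ℝ) 1) →
        (∀ t ∈ Set.Icc (0 : ℝ) 1, ∀ v w : E, ⟪S t v, w⟫_ℂ = ⟪v, S t w⟫_ℂ) →
        ContinuousOn A (Set.Icc (0 : ℝ) 1) →
        (∀ t ∈ Set.Icc (0 : ℝ) 1, ∀ v w : E, ⟪A t v, w⟫_ℂ = -⟪v, A t w⟫_ℂ) →
        (∀ t ∈ Set.Icc (0 : ℝ) 1, ‖f' t - S t (f t) - A t (f t)‖ ≤ M₁ * ‖f t‖) →
        (∀ t ∈ Set.Icc (0 : ℝ) 1, ∀ v : E,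
          (⟪S' t v + (S t (A t v) - A t (S t v)), v⟫_ℂ).re ≥ -M₀ * ‖v‖ ^ 2) →
        ∀ t ∈ Set.Icc (0 : ℝ) 1,
          ‖f t‖ ^ 2 ≤ Real.exp (N * (M₀ + M₁ + M₁ ^ 2)) *
            ‖f 0‖ ^ (2 * (1 - t)) * ‖f 1‖ ^ (2 * t) := by
  refine ⟨1, zero_le_one, ?_⟩
  intro E _ _ _ f f' S S' A M₀ M₁ hM₀ hM₁ hf _ hS _ hSsymm _ hAskew hf' hcoer t ht
  let _ : InnerProductSpace ℝ E := InnerProductSpace.rclikeToReal ℂ E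
  have hSℝ (x) (hx : x ∈ Icc (0 : ℝ) 1) : HasDerivWithinAt (fun y => (S y).restrictScalars ℝ)
      ((S' x).restrictScalars ℝ) (Icc 0 1) x :=
    (ContinuousLinearMap.restrictScalarsL ℂ E E ℝ ℝ).hasFDerivAt.comp_hasDerivWithinAt x (hS x hx)
  have key := norm_sq_le_exp_mul_rpow (A := fun y => (A y).restrictScalars ℝ) hf hSℝ
    (fun x hx v w => congrArg Complex.re (hSsymm x hx v w))
    (fun x hx v w => (congrArg Complex.re (hAskew x hx v w)).trans (Complex.neg_re _)) hf' hcoer ht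
  refine key.trans (mul_le_mul_of_nonneg_right (mul_le_mul_of_nonneg_right
    (exp_le_exp.2 ?_) (by positivity)) (by positivity))
  have ht₀ : 0 ≤ t * (1 - t) := mul_nonneg ht.1 (sub_nonneg.2 ht.2)
  have ht₁ : t * (1 - t) ≤ 1 / 4 := by nlinarith [sq_nonneg (2 * t - 1)]
  nlinarith [mul_le_mul_of_nonneg_left ht₁ (by positivity : 0 ≤ M₀ + M₁ ^ 2 / 2 + 4 * M₁)]
end
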